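/- If v = (v₁, v₂) ∈ V_K satisfies the twelve conditions: ∫₀ᵃ v₂(x,0) dx = 0, ∫₀ᵃ v₂(x,b) dx = 0, ∫₀ᵇ v₁(a,y) dy = 0, ∫₀ᵇ v₁(0,y) dy = 0 (edge integrals of the normal component); ∫₀ᵃ v₂(x,0)·(2x−a)/a dx = 0, ∫₀ᵃ v₂(x,b)·(2x−a)/a dx = 0, ∫₀ᵇ v₁(a,y)·(2y−b)/b dy = 0, ∫₀ᵇ v₁(0,y)·(2y−b)/b dy = 0 (first moments of the normal component); and ∫₀ᵃ v₁(x,0) dx = 0, ∫₀ᵃ v₁(x,b) dx = 0, ∫₀ᵇ v₂(a,y) dy = 0, ∫₀ᵇ v₂(0,y) dy = 0 (edge integrals of the tangential component), then v = 0. -/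

import Mathlib

/-!
On two opposite edges the normal component of `v` differs by an affine function of the edge
parameter, since every term of it that is not affine along the edge is independent of the normal
coordinate; an affine function with vanishing mean and first moment is zero. This kills the mixed
curl coefficients and the cross terms of the linear part, so `v₁` depends on `y` alone and `v₂`
on `x` alone. Then `v₁` restricted to the edge `x = 0` is a cubic vanishing at both endpoints
(the tangential conditions on the horizontal edges) with vanishing mean and first moment, which
forces it to be zero; symmetrically for `v₂`.
-/

open MvPolynomial

/-- Membership in the vector shape function space
`V_K = [P₁]² ⊕ span{curl x³, curl x²y, curl xy², curl y³, curl x⁴, curl y⁴}`,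
where `curl φ = (∂φ/∂y, −∂φ/∂x)`. -/
def memVK (v : MvPolynomial (Fin 2) ℝ × MvPolynomial (Fin 2) ℝ) : Prop :=
  ∃ (p q φ : MvPolynomial (Fin 2) ℝ) (c1 c2 c3 c4 c5 c6 : ℝ),
    p.totalDegree ≤ 1 ∧ q.totalDegree ≤ 1 ∧
    φ = C c1 * X 0 ^ 3 + C c2 * X 0 ^ 2 * X 1 + C c3 * X 0 * X 1 ^ 2 +
        C c4 * X 1 ^ 3 + C c5 * X 0 ^ 4 + C c6 * X 1 ^ 4 ∧
    v.1 = p + pderiv 1 φ ∧ v.2 = q - pderiv 0 φ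

theorem MvPolynomial.exists_eval_eq_of_totalDegree_le_one {σ R : Type*} [CommRing R] [Fintype σ]
    {p : MvPolynomial σ R} (hp : p.totalDegree ≤ 1) :
    ∃ (c₀ : R) (c : σ → R), ∀ z, eval z p = c₀ + ∑ i, c i * z i := by
  have hsplit : p = homogeneousComponent 0 p + homogeneousComponent 1 p := by
    ext d
    rw [coeff_add, coeff_homogeneousComponent, coeff_homogeneousComponent]
    by_cases hd : d.degree ≤ 1
    · rcases Nat.le_one_iff_eq_zero_or_eq_one.1 hd with h | h <;> simp [h]
    · rw [coeff_eq_zero_of_totalDegree_lt (hp.trans_lt (not_le.1 hd))]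
      simp
  have hmem : homogeneousComponent 1 p ∈ Submodule.span R (Set.range X) :=
    homogeneousSubmodule_one_eq_span_X (σ := σ) (R := R) ▸ homogeneousComponent_isHomogeneous 1 p
  obtain ⟨c, hc⟩ := (Submodule.mem_span_range_iff_exists_fun R).1 hmem
  refine ⟨coeff 0 p, c, fun z => ?_⟩
  conv_lhs => rw [hsplit, ← hc]
  simp [smul_eval]

theorem MvPolynomial.eq_zero_of_forall_eval_vecCons_eq_zero {R : Type*} [CommRing R] [IsDomain R]
    [Infinite R] {p : MvPolynomial (Fin 2) R} (h : ∀ x y, eval ![x, y] p = 0) : p = 0 :=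
  funext fun z => by
    rw [show z = ![z 0, z 1] from by ext i; fin_cases i <;> rfl, h, map_zero]

theorem memVK.exists_eval_eq {v : MvPolynomial (Fin 2) ℝ × MvPolynomial (Fin 2) ℝ} (hv : memVK v) :
    ∃ p₀ p₁ p₂ q₀ q₁ q₂ c₁ c₂ c₃ c₄ c₅ c₆ : ℝ, ∀ x y : ℝ,
      eval ![x, y] v.1 = p₀ + p₁ * x + p₂ * y +
        (c₂ * x ^ 2 + 2 * c₃ * x * y + 3 * c₄ * y ^ 2 + 4 * c₆ * y ^ 3) ∧
      eval ![x, y] v.2 = q₀ + q₁ * x + q₂ * y -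
        (3 * c₁ * x ^ 2 + 2 * c₂ * x * y + c₃ * y ^ 2 + 4 * c₅ * x ^ 3) := by
  obtain ⟨p, q, φ, c₁, c₂, c₃, c₄, c₅, c₆, hp, hq, rfl, hv₁, hv₂⟩ := hv
  obtain ⟨p₀, p', hp'⟩ := exists_eval_eq_of_totalDegree_le_one hp
  obtain ⟨q₀, q', hq'⟩ := exists_eval_eq_of_totalDegree_le_one hq
  refine ⟨p₀, p' 0, p' 1, q₀, q' 0, q' 1, c₁, c₂, c₃, c₄, c₅, c₆, fun x y => ⟨?_, ?_⟩⟩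
  · rw [hv₁, eval_add, hp', Fin.sum_univ_two]
    simp [pderiv_X]
    ring
  · rw [hv₂, eval_sub, hq', Fin.sum_univ_two]
    simp [pderiv_X]
    ring

theorem integral_quartic (t k₀ k₁ k₂ k₃ k₄ : ℝ) :
    ∫ s in 0..t, (k₀ + k₁ * s + k₂ * s ^ 2 + k₃ * s ^ 3 + k₄ * s ^ 4) =
      k₀ * t + k₁ * t ^ 2 / 2 + k₂ * t ^ 3 / 3 + k₃ * t ^ 4 / 4 + k₄ * t ^ 5 / 5 := by
  rw [intervalIntegral.integral_eq_sub_of_hasDerivAt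
    (f := fun s => k₀ * s + k₁ * s ^ 2 / 2 + k₂ * s ^ 3 / 3 + k₃ * s ^ 4 / 4 + k₄ * s ^ 5 / 5)
    (fun s _ => ?_) (Continuous.intervalIntegrable (by continuity) _ _)]
  · ring
  · exact ((((((hasDerivAt_id s).const_mul k₀).add
      (((hasDerivAt_pow 2 s).const_mul k₁).div_const 2)).add
      (((hasDerivAt_pow 3 s).const_mul k₂).div_const 3)).add
      (((hasDerivAt_pow 4 s).const_mul k₃).div_const 4)).add
      (((hasDerivAt_pow 5 s).const_mul k₄).div_const 5)).congr_deriv (by norm_num; ring)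

theorem integral_cubic (t c₀ c₁ c₂ c₃ : ℝ) :
    ∫ s in 0..t, (c₀ + c₁ * s + c₂ * s ^ 2 + c₃ * s ^ 3) =
      c₀ * t + c₁ * t ^ 2 / 2 + c₂ * t ^ 3 / 3 + c₃ * t ^ 4 / 4 := by
  simpa using integral_quartic t c₀ c₁ c₂ c₃ 0

theorem integral_cubic_mul_moment {t : ℝ} (ht : t ≠ 0) (c₀ c₁ c₂ c₃ : ℝ) :
    ∫ s in 0..t, (c₀ + c₁ * s + c₂ * s ^ 2 + c₃ * s ^ 3) * ((2 * s - t) / t) =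
      t ^ 2 * (10 * c₁ + 10 * c₂ * t + 9 * c₃ * t ^ 2) / 60 := by
  have hexp : ∀ s, (c₀ + c₁ * s + c₂ * s ^ 2 + c₃ * s ^ 3) * ((2 * s - t) / t) =
      -c₀ + (2 * c₀ / t - c₁) * s + (2 * c₁ / t - c₂) * s ^ 2 + (2 * c₂ / t - c₃) * s ^ 3 +
        2 * c₃ / t * s ^ 4 := fun s => by field_simp; ring
  simp_rw [hexp, integral_quartic]
  field_simp
  ring

theorem affine_eq_zero_of_integral_sub {t α β : ℝ} {f g : ℝ → ℝ} (ht : 0 < t)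
    (hfg : ∀ s, f s - g s = α + β * s)
    (hf₀ : ∫ s in 0..t, f s = 0) (hg₀ : ∫ s in 0..t, g s = 0)
    (hf₁ : ∫ s in 0..t, f s * ((2 * s - t) / t) = 0)
    (hg₁ : ∫ s in 0..t, g s * ((2 * s - t) / t) = 0) (hf : Continuous f) (hg : Continuous g) :
    α = 0 ∧ β = 0 := by
  have hw : Continuous fun s : ℝ => (2 * s - t) / t := by continuity
  have hmean : ∫ s in 0..t, (α + β * s + 0 * s ^ 2 + 0 * s ^ 3) = 0 := by
    simp_rw [zero_mul, add_zero, ← hfg]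
    rw [intervalIntegral.integral_sub (hf.intervalIntegrable _ _) (hg.intervalIntegrable _ _),
      hf₀, hg₀, sub_zero]
  have hmom : ∫ s in 0..t, (α + β * s + 0 * s ^ 2 + 0 * s ^ 3) * ((2 * s - t) / t) = 0 := by
    simp_rw [zero_mul, add_zero, ← hfg, sub_mul]
    rw [intervalIntegral.integral_sub (f := fun s => f s * _) (g := fun s => g s * _)
      ((hf.mul hw).intervalIntegrable _ _) ((hg.mul hw).intervalIntegrable _ _), hf₁, hg₁,
      sub_zero]
  rw [integral_cubic] at hmean
  rw [integral_cubic_mul_moment ht.ne'] at hmom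
  have hβ : β = 0 := by
    have : β * t ^ 2 = 0 := by linear_combination 6 * hmom
    simpa [ht.ne'] using this
  refine ⟨?_, hβ⟩
  have : α * t = 0 := by linear_combination hmean - t ^ 2 / 2 * hβ
  simpa [ht.ne'] using this

theorem cubic_eq_zero_of_integral {t c₀ c₁ c₂ c₃ : ℝ} (ht : 0 < t)
    (h₀ : c₀ = 0) (hend : c₀ + c₁ * t + c₂ * t ^ 2 + c₃ * t ^ 3 = 0)
    (hmean : ∫ s in 0..t, (c₀ + c₁ * s + c₂ * s ^ 2 + c₃ * s ^ 3) = 0)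
    (hmom : ∫ s in 0..t, (c₀ + c₁ * s + c₂ * s ^ 2 + c₃ * s ^ 3) * ((2 * s - t) / t) = 0) :
    c₀ = 0 ∧ c₁ = 0 ∧ c₂ = 0 ∧ c₃ = 0 := by
  rw [integral_cubic] at hmean
  rw [integral_cubic_mul_moment ht.ne'] at hmom
  have h₃ : c₃ * t ^ 4 = 0 := by linear_combination 10 * t * (hend - h₀) - 60 * hmom
  have h₂ : c₂ * t ^ 3 = 0 := by
    linear_combination -(12 * hmean - 12 * t * h₀ - 6 * t * (hend - h₀) + 3 * h₃) / 2
  have h₁ : c₁ * t ^ 2 = 0 := by linear_combination t * (hend - h₀) - h₂ - h₃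
  simp only [mul_eq_zero, pow_eq_zero_iff', ht.ne', false_and, or_false] at h₁ h₂ h₃
  exact ⟨h₀, h₁, h₂, h₃⟩

theorem memVK.exists_eval_eq_cubic_of_normal_moments {a b : ℝ} (ha : 0 < a) (hb : 0 < b)
    {v : MvPolynomial (Fin 2) ℝ × MvPolynomial (Fin 2) ℝ} (hv : memVK v)
    (hn1 : ∫ x in 0..a, eval ![x, 0] v.2 = 0) (hn3 : ∫ x in 0..a, eval ![x, b] v.2 = 0)
    (hn2 : ∫ y in 0..b, eval ![a, y] v.1 = 0) (hn4 : ∫ y in 0..b, eval ![0, y] v.1 = 0)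
    (hm1 : ∫ x in 0..a, eval ![x, 0] v.2 * ((2 * x - a) / a) = 0)
    (hm3 : ∫ x in 0..a, eval ![x, b] v.2 * ((2 * x - a) / a) = 0)
    (hm2 : ∫ y in 0..b, eval ![a, y] v.1 * ((2 * y - b) / b) = 0)
    (hm4 : ∫ y in 0..b, eval ![0, y] v.1 * ((2 * y - b) / b) = 0) :
    ∃ p₀ p₁ p₂ p₃ q₀ q₁ q₂ q₃ : ℝ, ∀ x y : ℝ,
      eval ![x, y] v.1 = p₀ + p₁ * y + p₂ * y ^ 2 + p₃ * y ^ 3 ∧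
      eval ![x, y] v.2 = q₀ + q₁ * x + q₂ * x ^ 2 + q₃ * x ^ 3 := by
  obtain ⟨p₀, p₁, p₂, q₀, q₁, q₂, c₁, c₂, c₃, c₄, c₅, c₆, hE⟩ := hv.exists_eval_eq
  obtain ⟨hp₁c₂, hc₃⟩ := affine_eq_zero_of_integral_sub (α := p₁ * a + c₂ * a ^ 2)
    (β := 2 * c₃ * a) hb
    (fun y => by rw [(hE a y).1, (hE 0 y).1]; ring) hn2 hn4 hm2 hm4
    ((continuous_eval _).comp (by fun_prop)) ((continuous_eval _).comp (by fun_prop))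
  obtain ⟨hq₂c₃, hc₂⟩ := affine_eq_zero_of_integral_sub (α := q₂ * b - c₃ * b ^ 2)
    (β := -2 * c₂ * b) ha
    (fun x => by rw [(hE x b).2, (hE x 0).2]; ring) hn3 hn1 hm3 hm1
    ((continuous_eval _).comp (by fun_prop)) ((continuous_eval _).comp (by fun_prop))
  simp only [mul_eq_zero, ha.ne', hb.ne', two_ne_zero, neg_eq_zero, false_or, or_false]
    at hc₂ hc₃
  subst hc₂ hc₃
  have hp₁ : p₁ = 0 := by simpa [ha.ne'] using hp₁c₂
  have hq₂ : q₂ = 0 := by simpa [hb.ne'] using hq₂c₃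
  subst hp₁ hq₂
  refine ⟨p₀, p₂, 3 * c₄, 4 * c₆, q₀, q₁, -3 * c₁, -4 * c₅, fun x y => ⟨?_, ?_⟩⟩
  · rw [(hE x y).1]; ring
  · rw [(hE x y).2]; ring

/-- unisolvency of the 12 degrees of freedom
(edge integrals and first moments of the normal component,
edge integrals of the tangential component) for the Stokes element
on `K = [0,a] × [0,b]`. -/
theorem stmt1 (a b : ℝ) (ha : 0 < a) (hb : 0 < b)
    (v : MvPolynomial (Fin 2) ℝ × MvPolynomial (Fin 2) ℝ) (hv : memVK v)
    (hn1 : (∫ x in (0:ℝ)..a, eval ![x, 0] v.2) = 0)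
    (hn3 : (∫ x in (0:ℝ)..a, eval ![x, b] v.2) = 0)
    (hn2 : (∫ y in (0:ℝ)..b, eval ![a, y] v.1) = 0)
    (hn4 : (∫ y in (0:ℝ)..b, eval ![(0:ℝ), y] v.1) = 0)
    (hm1 : (∫ x in (0:ℝ)..a, eval ![x, 0] v.2 * ((2 * x - a) / a)) = 0)
    (hm3 : (∫ x in (0:ℝ)..a, eval ![x, b] v.2 * ((2 * x - a) / a)) = 0)
    (hm2 : (∫ y in (0:ℝ)..b, eval ![a, y] v.1 * ((2 * y - b) / b)) = 0)
    (hm4 : (∫ y in (0:ℝ)..b, eval ![(0:ℝ), y] v.1 * ((2 * y - b) / b)) = 0)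
    (ht1 : (∫ x in (0:ℝ)..a, eval ![x, 0] v.1) = 0)
    (ht3 : (∫ x in (0:ℝ)..a, eval ![x, b] v.1) = 0)
    (ht2 : (∫ y in (0:ℝ)..b, eval ![a, y] v.2) = 0)
    (ht4 : (∫ y in (0:ℝ)..b, eval ![(0:ℝ), y] v.2) = 0) :
    v = 0 := by
  obtain ⟨p₀, p₁, p₂, p₃, q₀, q₁, q₂, q₃, hE⟩ :=
    hv.exists_eval_eq_cubic_of_normal_moments ha hb hn1 hn3 hn2 hn4 hm1 hm3 hm2 hm4
  simp only [hE, intervalIntegral.integral_const, sub_zero, smul_eq_mul, mul_eq_zero, ha.ne',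
    hb.ne', false_or] at ht1 ht3 hn4 hm4 ht4 ht2 hn1 hm1
  obtain ⟨rfl, rfl, rfl, rfl⟩ := cubic_eq_zero_of_integral hb (by simpa using ht1) ht3 hn4 hm4
  obtain ⟨rfl, rfl, rfl, rfl⟩ := cubic_eq_zero_of_integral ha (by simpa using ht4) ht2 hn1 hm1
  exact Prod.ext (eq_zero_of_forall_eval_vecCons_eq_zero fun x y => by simp [hE])
    (eq_zero_of_forall_eval_vecCons_eq_zero fun x y => by simp [hE])
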